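/- Let (X,d) be a proper metric space with basepoint x₀, A a closed subset containing x₀, and W an open linear neighborhood of A (i.e., there is c > 0 with d(A \ B_r, (X\W) \ B_r) ≥ cr for all r > 0). Suppose f ∈ U(W,x₀) is bounded. Define φ(x) = d(x, X\W)/(d(x,A) + d(x, X\W)) and f̂: X → ℂ by f̂(x) = φ(x)·f(x) for x ∈ W and f̂(x) = 0 for x ∉ W. Then f̂ ∈ U(X,x₀) and f̂ agrees with f on A. -/

import Mathlib

/-!
The cutoff `φ = d(·, X∖W) / (d(·, A) + d(·, X∖W))` equals `1` on `A`, vanishes off `W`, and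
satisfies `|φ x - φ y| · (d(x, A) + d(x, X∖W)) ≤ d(x, y)`. Linearity of the neighborhood `W`
gives `c‖x‖ ≤ (1 + c)(d(x, A) + d(x, X∖W))`, so `φ` itself lies in `U(X, x₀)`. The product of
`φ` with `f` then lies in `U(X, x₀)`: off `W` the jump of `φ f` is controlled by the jump of `φ`,
since `φ` vanishes there.
-/

open Metric Classical

/-- `h ∈ U(X, x0)` for complex-valued functions. -/
def MemU {X : Type*} [MetricSpace X] (x0 : X) (h : X → ℂ) : Prop :=
  (∃ M : ℝ, ∀ x : X, ‖h x‖ ≤ M) ∧ Continuous h ∧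
    ∃ c : ℝ, 0 ≤ c ∧ ∀ x y : X, ‖h x - h y‖ * dist x x0 ≤ c * dist x y

lemma abs_div_add_sub_div_add_mul_le {a b a' b' δ : ℝ} (ha' : 0 ≤ a') (hb' : 0 ≤ b')
    (h : 0 < a + b) (h' : 0 < a' + b') (hδa : |a - a'| ≤ δ) (hδb : |b - b'| ≤ δ) :
    |b / (a + b) - b' / (a' + b')| * (a + b) ≤ δ := by
  have key : (b / (a + b) - b' / (a' + b')) * (a + b)
      = (a' * (b - b') - b' * (a - a')) / (a' + b') := by
    field_simp
    ring
  calc |b / (a + b) - b' / (a' + b')| * (a + b)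
      = |(b / (a + b) - b' / (a' + b')) * (a + b)| := by rw [abs_mul, abs_of_pos h]
    _ = |a' * (b - b') - b' * (a - a')| / (a' + b') := by rw [key, abs_div, abs_of_pos h']
    _ ≤ (a' * |b - b'| + b' * |a - a'|) / (a' + b') := by
        gcongr
        refine (abs_sub _ _).trans_eq ?_
        rw [abs_mul, abs_mul, abs_of_nonneg ha', abs_of_nonneg hb']
    _ ≤ (a' * δ + b' * δ) / (a' + b') := by gcongr
    _ = δ := by field_simp

section Cutoff

variable {X : Type*} [MetricSpace X]

noncomputable def cutoff (s t : Set X) (x : X) : ℝ :=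
  infDist x t / (infDist x s + infDist x t)

variable {s t : Set X}

lemma cutoff_nonneg (x : X) : 0 ≤ cutoff s t x :=
  div_nonneg infDist_nonneg (add_nonneg infDist_nonneg infDist_nonneg)

lemma cutoff_le_one (x : X) : cutoff s t x ≤ 1 :=
  div_le_one_of_le₀ (le_add_of_nonneg_left infDist_nonneg)
    (add_nonneg infDist_nonneg infDist_nonneg)

lemma cutoff_eq_zero_of_mem {x : X} (hx : x ∈ t) : cutoff s t x = 0 := by
  simp [cutoff, infDist_zero_of_mem hx]

lemma cutoff_eq_one_of_mem (ht : IsClosed t) (ht' : t.Nonempty) (hst : Disjoint s t)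
    {x : X} (hx : x ∈ s) : cutoff s t x = 1 := by
  have hxt : 0 < infDist x t :=
    (ht.notMem_iff_infDist_pos ht').1 (hst.notMem_of_mem_left hx)
  rw [cutoff, infDist_zero_of_mem hx, zero_add, div_self hxt.ne']

lemma infDist_add_infDist_pos (hs : IsClosed s) (hs' : s.Nonempty) (ht : IsClosed t)
    (ht' : t.Nonempty) (hst : Disjoint s t) (x : X) : 0 < infDist x s + infDist x t := by
  by_cases hx : x ∈ s
  · exact add_pos_of_nonneg_of_pos infDist_nonneg
      ((ht.notMem_iff_infDist_pos ht').1 (hst.notMem_of_mem_left hx))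
  · exact add_pos_of_pos_of_nonneg ((hs.notMem_iff_infDist_pos hs').1 hx) infDist_nonneg

lemma continuous_cutoff (hs : IsClosed s) (hs' : s.Nonempty) (ht : IsClosed t)
    (ht' : t.Nonempty) (hst : Disjoint s t) : Continuous (cutoff s t) :=
  (continuous_infDist_pt t).div ((continuous_infDist_pt s).add (continuous_infDist_pt t))
    fun x => (infDist_add_infDist_pos hs hs' ht ht' hst x).ne'

lemma abs_infDist_sub_infDist_le (s : Set X) (x y : X) :
    |infDist x s - infDist y s| ≤ dist x y := by
  simpa [Real.dist_eq] using (lipschitz_infDist_pt s).dist_le_mul x y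

lemma abs_cutoff_sub_mul_le (hs : IsClosed s) (hs' : s.Nonempty) (ht : IsClosed t)
    (ht' : t.Nonempty) (hst : Disjoint s t) (x y : X) :
    |cutoff s t x - cutoff s t y| * (infDist x s + infDist x t) ≤ dist x y :=
  abs_div_add_sub_div_add_mul_le infDist_nonneg infDist_nonneg
    (infDist_add_infDist_pos hs hs' ht ht' hst x) (infDist_add_infDist_pos hs hs' ht ht' hst y)
    (abs_infDist_sub_infDist_le s x y) (abs_infDist_sub_infDist_le t x y)

/-- `W` is a linear neighborhood of `A` when `A` and `X∖W` are linearly separated. -/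
def LinearlySeparated (x0 : X) (c : ℝ) (s t : Set X) : Prop :=
  ∀ r : ℝ, 0 < r → ∀ a ∈ s, r ≤ dist a x0 → ∀ b ∈ t, r ≤ dist b x0 → c * r ≤ dist a b

variable {x0 : X} {c : ℝ}

lemma mul_dist_le_mul_dist_add_dist (hc : 0 < c)
    (hlin : LinearlySeparated x0 c s t)
    {a b : X} (ha : a ∈ s) (hb : b ∈ t) (x : X) :
    c * dist x x0 ≤ (1 + c) * (dist x a + dist x b) := by
  have hab : dist a b ≤ dist x a + dist x b := dist_triangle_left a b x
  by_cases hr : 0 < dist x x0 - (dist x a + dist x b)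
  · have hax := dist_triangle x a x0
    have hbx := dist_triangle x b x0
    have := hlin _ hr a ha (by linarith [dist_nonneg (x := x) (y := b)])
      b hb (by linarith [dist_nonneg (x := x) (y := a)])
    linarith
  · nlinarith [dist_nonneg (x := x) (y := a), dist_nonneg (x := x) (y := b)]

lemma mul_dist_le_mul_infDist_add_infDist (hs' : s.Nonempty) (ht' : t.Nonempty) (hc : 0 < c)
    (hlin : LinearlySeparated x0 c s t)
    (x : X) : c * dist x x0 ≤ (1 + c) * (infDist x s + infDist x t) := by
  have h1c : 0 < 1 + c := by linarith
  have hs_le : c / (1 + c) * dist x x0 - infDist x t ≤ infDist x s := by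
    refine (le_infDist hs').2 fun a ha => ?_
    rw [sub_le_comm]
    refine (le_infDist ht').2 fun b hb => ?_
    have := mul_dist_le_mul_dist_add_dist hc hlin ha hb x
    rw [div_mul_eq_mul_div, sub_le_iff_le_add, div_le_iff₀ h1c]
    linarith
  rw [div_mul_eq_mul_div, div_sub' h1c.ne', div_le_iff₀ h1c] at hs_le
  linarith

lemma abs_cutoff_sub_mul_dist_le (hs : IsClosed s) (hs' : s.Nonempty) (ht : IsClosed t)
    (ht' : t.Nonempty) (hst : Disjoint s t) (hc : 0 < c)
    (hlin : LinearlySeparated x0 c s t)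
    (x y : X) : |cutoff s t x - cutoff s t y| * dist x x0 ≤ (1 + c) / c * dist x y := by
  rw [div_mul_eq_mul_div, le_div_iff₀ hc]
  calc |cutoff s t x - cutoff s t y| * dist x x0 * c
      = |cutoff s t x - cutoff s t y| * (c * dist x x0) := by ring
    _ ≤ |cutoff s t x - cutoff s t y| * ((1 + c) * (infDist x s + infDist x t)) :=
      mul_le_mul_of_nonneg_left (mul_dist_le_mul_infDist_add_infDist hs' ht' hc hlin x)
        (abs_nonneg _)
    _ = (1 + c) * (|cutoff s t x - cutoff s t y| * (infDist x s + infDist x t)) := by ring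
    _ ≤ (1 + c) * dist x y :=
      mul_le_mul_of_nonneg_left (abs_cutoff_sub_mul_le hs hs' ht ht' hst x y) (by linarith)

end Cutoff

section Product

variable {X : Type*} [MetricSpace X]

lemma norm_ofReal_mul_sub_ofReal_mul_le {a b : ℝ} (ha : |a| ≤ 1) (u v : ℂ) :
    ‖(a : ℂ) * u - b * v‖ ≤ ‖u - v‖ + |a - b| * ‖v‖ := by
  calc ‖(a : ℂ) * u - b * v‖ = ‖(a : ℂ) * (u - v) + ((a - b : ℝ) : ℂ) * v‖ := by
        push_cast
        ring_nf
    _ ≤ |a| * ‖u - v‖ + |a - b| * ‖v‖ := by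
      grw [norm_add_le, norm_mul, norm_mul, Complex.norm_real, Complex.norm_real,
        Real.norm_eq_abs, Real.norm_eq_abs]
    _ ≤ ‖u - v‖ + |a - b| * ‖v‖ := by
      gcongr
      exact mul_le_of_le_one_left (norm_nonneg _) ha

theorem memU_ite_ofReal_mul {x0 : X} {W : Set X} (hW : IsOpen W) {φ : X → ℝ}
    (hφ : Continuous φ) (hφ0 : ∀ x, 0 ≤ φ x) (hφ1 : ∀ x, φ x ≤ 1) (hφW : ∀ x ∉ W, φ x = 0)
    {L : ℝ} (hL : 0 ≤ L) (hφU : ∀ x y, |φ x - φ y| * dist x x0 ≤ L * dist x y)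
    {f : X → ℂ} {M : ℝ} (hM : 0 ≤ M) (hfb : ∀ x ∈ W, ‖f x‖ ≤ M) (hfc : ContinuousOn f W)
    {cf : ℝ} (hcf : 0 ≤ cf)
    (hfU : ∀ x ∈ W, ∀ y ∈ W, ‖f x - f y‖ * dist x x0 ≤ cf * dist x y) :
    MemU x0 (fun x => if x ∈ W then (φ x : ℂ) * f x else 0) := by
  set F : X → ℂ := fun x => if x ∈ W then (φ x : ℂ) * f x else 0
  have hF_le : ∀ x, ‖F x‖ ≤ M * φ x := by
    intro x
    by_cases hx : x ∈ W
    · simp only [F, if_pos hx, norm_mul, Complex.norm_real, Real.norm_of_nonneg (hφ0 x)]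
      rw [mul_comm]
      exact mul_le_mul_of_nonneg_right (hfb x hx) (hφ0 x)
    · simp [F, hx, hφW x hx]
  have hF_sub_le : ∀ x y, ‖F x - F y‖ * dist x x0 ≤ (cf + M * L) * dist x y := by
    intro x y
    by_cases hxy : x ∈ W ∧ y ∈ W
    · have h := norm_ofReal_mul_sub_ofReal_mul_le
        (by rw [abs_of_nonneg (hφ0 x)]; exact hφ1 x) (f x) (f y) (b := φ y)
      simp only [F, if_pos hxy.1, if_pos hxy.2]
      calc _ ≤ (‖f x - f y‖ + |φ x - φ y| * M) * dist x x0 := by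
            gcongr
            exact h.trans (by gcongr; exact hfb y hxy.2)
        _ = ‖f x - f y‖ * dist x x0 + M * (|φ x - φ y| * dist x x0) := by ring
        _ ≤ cf * dist x y + M * (L * dist x y) :=
            add_le_add (hfU x hxy.1 y hxy.2) (mul_le_mul_of_nonneg_left (hφU x y) hM)
        _ = (cf + M * L) * dist x y := by ring
    · have hφ_sum : φ x + φ y = |φ x - φ y| := by
        rcases not_and_or.1 hxy with hx | hy
        · simp [hφW x hx, abs_of_nonneg (hφ0 y)]
        · simp [hφW y hy, abs_of_nonneg (hφ0 x)]
      have h : ‖F x - F y‖ ≤ M * |φ x - φ y| := by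
        rw [← hφ_sum, mul_add]
        exact (norm_sub_le _ _).trans (add_le_add (hF_le x) (hF_le y))
      calc ‖F x - F y‖ * dist x x0 ≤ M * |φ x - φ y| * dist x x0 := by gcongr
        _ = M * (|φ x - φ y| * dist x x0) := by ring
        _ ≤ M * (L * dist x y) := mul_le_mul_of_nonneg_left (hφU x y) hM
        _ ≤ (cf + M * L) * dist x y := by nlinarith [dist_nonneg (x := x) (y := y)]
  refine ⟨⟨M, fun x => (hF_le x).trans (mul_le_of_le_one_right hM (hφ1 x))⟩, ?_,
    cf + M * L, by positivity, hF_sub_le⟩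
  refine continuous_iff_continuousAt.2 fun x => ?_
  by_cases hx : x ∈ W
  · refine ((Complex.continuous_ofReal.comp hφ).continuousAt.mul
      (hfc.continuousAt (hW.mem_nhds hx))).congr ?_
    filter_upwards [hW.mem_nhds hx] with y hy
    exact (if_pos hy).symm
  · rw [ContinuousAt, show F x = 0 from if_neg hx]
    refine squeeze_zero_norm hF_le ?_
    simpa [hφW x hx] using (hφ.tendsto x).const_mul M

end Product

theorem cutoff_extension_memU_general
    {X : Type*} [MetricSpace X] (x0 : X)
    (A W : Set X) (hA : IsClosed A) (hAne : A.Nonempty)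
    (hW : IsOpen W) (hAW : A ⊆ W) (hWne : W ≠ Set.univ)
    (c : ℝ) (hc : 0 < c)
    (hlin : ∀ r : ℝ, 0 < r → ∀ a ∈ A, r ≤ dist a x0 →
      ∀ b ∉ W, r ≤ dist b x0 → c * r ≤ dist a b)
    (f : X → ℂ) (M : ℝ) (hfb : ∀ x ∈ W, ‖f x‖ ≤ M)
    (hfc : ContinuousOn f W)
    (cf : ℝ) (hcf : 0 ≤ cf)
    (hflip : ∀ x ∈ W, ∀ y ∈ W, ‖f x - f y‖ * dist x x0 ≤ cf * dist x y) :
    MemU x0 (fun x => if x ∈ W then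
        ((infDist x Wᶜ / (infDist x A + infDist x Wᶜ) : ℝ) : ℂ) * f x
      else 0) ∧
    ∀ a ∈ A, (if a ∈ W then
        ((infDist a Wᶜ / (infDist a A + infDist a Wᶜ) : ℝ) : ℂ) * f a
      else 0) = f a := by
  have hWc : Wᶜ.Nonempty := Set.nonempty_compl.2 hWne
  have hAWc : Disjoint A Wᶜ := Set.disjoint_compl_right_iff_subset.2 hAW
  have hM : 0 ≤ M := let ⟨a, ha⟩ := hAne; (norm_nonneg _).trans (hfb a (hAW ha))
  refine ⟨memU_ite_ofReal_mul hW (continuous_cutoff hA hAne hW.isClosed_compl hWc hAWc)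
    cutoff_nonneg cutoff_le_one (fun x hx => cutoff_eq_zero_of_mem hx) (by positivity)
    (abs_cutoff_sub_mul_dist_le hA hAne hW.isClosed_compl hWc hAWc hc hlin) hM hfb hfc hcf
    hflip, fun a ha => ?_⟩
  have h1 : cutoff A Wᶜ a = 1 := cutoff_eq_one_of_mem hW.isClosed_compl hWc hAWc ha
  rw [cutoff] at h1
  rw [if_pos (hAW ha), h1, Complex.ofReal_one, one_mul]

/-- (Part of the proof of Proposition 3.4.) Let `X` be a proper metric space
with basepoint `x0`, `A` a nonempty closed subset containing `x0`, and `W ≠ X`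
an open linear neighborhood of `A` (with linearity constant `c > 0`, stated
pointwise).  Given `f` which on `W` is bounded, continuous and satisfies the
`U`-inequality, the function `f̂` defined by
`f̂(x) = (d(x, X\W)/(d(x,A)+d(x,X\W))) · f(x)` on `W` and `f̂ = 0` off `W`
belongs to `U(X, x0)` and agrees with `f` on `A`. -/
theorem cutoff_extension_memU
    {X : Type*} [MetricSpace X] [ProperSpace X] (x0 : X)
    (A W : Set X) (hA : IsClosed A) (hAne : A.Nonempty) (hx0 : x0 ∈ A)
    (hW : IsOpen W) (hAW : A ⊆ W) (hWne : W ≠ Set.univ)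
    (c : ℝ) (hc : 0 < c)
    (hlin : ∀ r : ℝ, 0 < r → ∀ a ∈ A, r ≤ dist a x0 →
      ∀ b ∉ W, r ≤ dist b x0 → c * r ≤ dist a b)
    (f : X → ℂ) (M : ℝ) (hfb : ∀ x ∈ W, ‖f x‖ ≤ M)
    (hfc : ContinuousOn f W)
    (cf : ℝ) (hcf : 0 ≤ cf)
    (hflip : ∀ x ∈ W, ∀ y ∈ W, ‖f x - f y‖ * dist x x0 ≤ cf * dist x y) :
    MemU x0 (fun x => if x ∈ W then
        ((infDist x Wᶜ / (infDist x A + infDist x Wᶜ) : ℝ) : ℂ) * f x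
      else 0) ∧
    ∀ a ∈ A, (if a ∈ W then
        ((infDist a Wᶜ / (infDist a A + infDist a Wᶜ) : ℝ) : ℂ) * f a
      else 0) = f a :=
  cutoff_extension_memU_general x0 A W hA hAne hW hAW hWne c hc hlin f M hfb hfc cf hcf hflip
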